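/- arXiv:2111.04952 — 2 statements merged into one kernel-verified Lean document; each statement's English description precedes it below -/
import Mathlib

section
/- Let L^γ and L^{γ'} be two irreducible stochastic matrices on a finite state space, α ∈ (0,1), and let η(γ) = (I − αL^γ)^{-1} h_γ be the discounted cost vector and g_α(γ) = (I − αL^γ + α e π_γ)^{-1} h_γ the α-potential (with π_γ the stationary distribution of L^γ, e the all-ones vector). Then η(γ') − η(γ) = α (I − αL^{γ'})^{-1} (L^{γ'} − L^γ) g_α(γ), assuming the same per-step cost vector h_γ = h_{γ'} = h. -/
open Matrix

lemma aux_isUnit {n : Type*} [Fintype n] [DecidableEq n]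
    (L : Matrix n n ℝ) (α : ℝ) (hα0 : 0 < α) (hα1 : α < 1)
    (hL_nonneg : ∀ i i', 0 ≤ L i i') (hL_row : ∀ i, ∑ i', L i i' = 1) :
    IsUnit (1 - α • L) := by
  rw [← Matrix.mulVec_injective_iff_isUnit]
  intro x y hxy
  have hz : (1 - α • L) *ᵥ (x - y) = 0 := by
    rw [Matrix.mulVec_sub, hxy, sub_self]
  set z := x - y with hzdef
  have hrec : ∀ i, z i = α * ∑ j, L i j * z j := by
    intro i
    have h1 := congrFun hz i
    have h3 : ∑ x, ((if i = x then (1:ℝ) else 0) - α * L i x) * z x = 0 := by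
      simpa [Matrix.mulVec, dotProduct, Matrix.sub_apply, Matrix.smul_apply,
        Matrix.one_apply] using h1
    have h2 : z i - α * (∑ j, L i j * z j) = 0 := by
      calc z i - α * (∑ j, L i j * z j)
          = ∑ x, ((if i = x then (1:ℝ) else 0) - α * L i x) * z x := by
            rw [Finset.sum_congr rfl (fun x _ => show ((if i = x then (1:ℝ) else 0) - α * L i x) * z x
                = (if i = x then z x else 0) - α * (L i x * z x) by
              rw [sub_mul, ite_mul, one_mul, zero_mul, mul_assoc]),
              Finset.sum_sub_distrib, Finset.sum_ite_eq, if_pos (Finset.mem_univ i),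
              ← Finset.mul_sum]
        _ = 0 := h3
    linarith
  have hz0 : z = 0 := by
    by_contra hne
    rcases isEmpty_or_nonempty n with hn | hn
    · exact hne (Subsingleton.elim _ _)
    obtain ⟨i, -, hi⟩ := Finset.exists_max_image Finset.univ (fun i => |z i|)
      ⟨Classical.arbitrary n, Finset.mem_univ _⟩
    have hipos : 0 < |z i| := by
      rcases lt_or_eq_of_le (abs_nonneg (z i)) with hlt | heq
      · exact hlt
      · exfalso; apply hne; funext j
        have hj := hi j (Finset.mem_univ j)
        rw [← heq] at hj
        have : |z j| = 0 := le_antisymm hj (abs_nonneg _)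
        simpa [abs_eq_zero] using this
    have hle : |z i| ≤ α * |z i| := by
      calc |z i| = |α * ∑ j, L i j * z j| := by rw [← hrec i]
        _ = α * |∑ j, L i j * z j| := by rw [abs_mul, abs_of_pos hα0]
        _ ≤ α * ∑ j, |L i j * z j| :=
            mul_le_mul_of_nonneg_left (Finset.abs_sum_le_sum_abs _ _) hα0.le
        _ ≤ α * ∑ j, L i j * |z i| := by
            apply mul_le_mul_of_nonneg_left _ hα0.le
            apply Finset.sum_le_sum
            intro j _
            rw [abs_mul, abs_of_nonneg (hL_nonneg i j)]
            exact mul_le_mul_of_nonneg_left (hi j (Finset.mem_univ j)) (hL_nonneg i j)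
        _ = α * |z i| := by rw [← Finset.sum_mul, hL_row i, one_mul]
    nlinarith
  exact sub_eq_zero.mp hz0

/-- Let `L` and `L'` be two irreducible row-stochastic matrices on a finite
state space, `α ∈ (0,1)`, `h` a cost vector, `η(L) = (I − αL)⁻¹ h` the discounted cost
vector, and `g = (I − αL + α e πᵀ)⁻¹ h` the α-potential, with `π` the stationary
distribution of `L` and `e` the all-ones vector.  Then
`η(L') − η(L) = α (I − αL')⁻¹ (L' − L) g`. -/
theorem stmt8 {n : Type*} [Fintype n] [DecidableEq n]
    (L L' : Matrix n n ℝ) (α : ℝ) (hα : α ∈ Set.Ioo (0 : ℝ) 1)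
    (h : n → ℝ)
    -- `L` and `L'` are row-stochastic
    (hL_nonneg : ∀ i i', 0 ≤ L i i') (hL_row : ∀ i, ∑ i', L i i' = 1)
    (hL'_nonneg : ∀ i i', 0 ≤ L' i i') (hL'_row : ∀ i, ∑ i', L' i i' = 1)
    -- `L` and `L'` are irreducible
    (hL_irr : ∀ i i', ∃ k : ℕ, 0 < (L ^ k) i i')
    (hL'_irr : ∀ i i', ∃ k : ℕ, 0 < (L' ^ k) i i')
    -- `π` is the stationary distribution of `L`
    (π : n → ℝ) (hπ_nonneg : ∀ i, 0 ≤ π i) (hπ_sum : ∑ i, π i = 1)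
    (hπ_stat : π ᵥ* L = π) :
    (1 - α • L')⁻¹ *ᵥ h - (1 - α • L)⁻¹ *ᵥ h
      = α • (((1 - α • L')⁻¹ * (L' - L)) *ᵥ
          ((1 - α • L + α • Matrix.of fun _ i' : n => π i')⁻¹ *ᵥ h)) := by
  obtain ⟨hα0, hα1⟩ := hα
  set A : Matrix n n ℝ := 1 - α • L with hAdef
  set A' : Matrix n n ℝ := 1 - α • L' with hA'def
  set E : Matrix n n ℝ := Matrix.of fun _ i' : n => π i' with hEdef
  set M : Matrix n n ℝ := A + α • E with hMdef
  have hA : IsUnit A := aux_isUnit L α hα0 hα1 hL_nonneg hL_row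
  have hA' : IsUnit A' := aux_isUnit L' α hα0 hα1 hL'_nonneg hL'_row
  have hπM : π ᵥ* M = π := by
    funext j
    have hstat := congrFun hπ_stat j
    simp only [Matrix.vecMul, dotProduct] at hstat ⊢
    simp only [hMdef, hAdef, hEdef, Matrix.add_apply, Matrix.sub_apply,
      Matrix.smul_apply, Matrix.one_apply, Matrix.of_apply, smul_eq_mul]
    rw [Finset.sum_congr rfl
      (fun i _ => show π i * ((if i = j then (1:ℝ) else 0) - α * L i j + α * π j)
          = (if i = j then π i else 0) - α * (π i * L i j) + α * (π i * π j) by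
        split <;> ring)]
    rw [Finset.sum_add_distrib, Finset.sum_sub_distrib, Finset.sum_ite_eq',
      ← Finset.mul_sum, ← Finset.mul_sum, ← Finset.sum_mul, hπ_sum]
    simp only [Finset.mem_univ, if_true]
    rw [hstat]
    ring
  have hM : IsUnit M := by
    rw [← Matrix.mulVec_injective_iff_isUnit]
    intro x y hxy
    have hz : M *ᵥ (x - y) = 0 := by rw [Matrix.mulVec_sub, hxy, sub_self]
    set z := x - y with hzdef
    have hπz : π ⬝ᵥ z = 0 := by
      have hdp : π ᵥ* M ⬝ᵥ z = π ⬝ᵥ (M *ᵥ z) := (Matrix.dotProduct_mulVec π M z).symm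
      rw [hπM, hz, dotProduct_zero] at hdp
      exact hdp
    have hEz : E *ᵥ z = 0 := by
      funext i
      simp only [Matrix.mulVec, dotProduct, hEdef, Matrix.of_apply, Pi.zero_apply]
      simpa [dotProduct] using hπz
    have hAz : A *ᵥ z = 0 := by
      have hz2 := hz
      rw [hMdef, Matrix.add_mulVec, Matrix.smul_mulVec, hEz, smul_zero,
        add_zero] at hz2
      exact hz2
    have hz0 : z = 0 := by
      have hinj := Matrix.mulVec_injective_iff_isUnit.mpr hA
      have heq : A *ᵥ z = A *ᵥ 0 := by rw [hAz, Matrix.mulVec_zero]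
      exact hinj heq
    exact sub_eq_zero.mp hz0
  set g : n → ℝ := M⁻¹ *ᵥ h with hgdef
  have hMg : M *ᵥ g = h := by
    rw [hgdef, Matrix.mulVec_mulVec,
      Matrix.mul_nonsing_inv M ((Matrix.isUnit_iff_isUnit_det M).mp hM),
      Matrix.one_mulVec]
  set c : ℝ := α * (π ⬝ᵥ g) with hcdef
  set e : n → ℝ := fun _ => 1 with hedef
  have hEg : E *ᵥ g = (π ⬝ᵥ g) • e := by
    funext i
    simp [hEdef, Matrix.mulVec, dotProduct, hedef]
  have hAg : A *ᵥ g = h - c • e := by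
    have hMg2 := hMg
    rw [hMdef, Matrix.add_mulVec, Matrix.smul_mulVec, hEg] at hMg2
    rw [← hMg2, hcdef]
    funext i
    simp only [Pi.add_apply, Pi.sub_apply, Pi.smul_apply, smul_eq_mul, hedef]
    ring
  have hAe : A *ᵥ e = (1 - α) • e := by
    funext i
    simp only [hAdef, Matrix.sub_mulVec, Matrix.one_mulVec, Matrix.smul_mulVec,
      Pi.sub_apply, Pi.smul_apply, smul_eq_mul, Matrix.mulVec, dotProduct, hedef,
      mul_one]
    rw [Finset.sum_congr rfl (fun x _ => show (1 - α • L) i x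
        = (if i = x then (1:ℝ) else 0) - α * L i x by
      simp [Matrix.one_apply]), Finset.sum_sub_distrib, Finset.sum_ite_eq,
      if_pos (Finset.mem_univ i), ← Finset.mul_sum, hL_row i]
    ring
  have hA'e : A' *ᵥ e = (1 - α) • e := by
    funext i
    simp only [hA'def, Matrix.sub_mulVec, Matrix.one_mulVec, Matrix.smul_mulVec,
      Pi.sub_apply, Pi.smul_apply, smul_eq_mul, Matrix.mulVec, dotProduct, hedef,
      mul_one]
    rw [Finset.sum_congr rfl (fun x _ => show (1 - α • L') i x
        = (if i = x then (1:ℝ) else 0) - α * L' i x by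
      simp [Matrix.one_apply]), Finset.sum_sub_distrib, Finset.sum_ite_eq,
      if_pos (Finset.mem_univ i), ← Finset.mul_sum, hL'_row i]
    ring
  have h1α : (1 : ℝ) - α ≠ 0 := by linarith
  have hAinv : ∀ (B : Matrix n n ℝ), IsUnit B → ∀ v : n → ℝ, B⁻¹ *ᵥ (B *ᵥ v) = v := by
    intro B hB v
    rw [Matrix.mulVec_mulVec,
      Matrix.nonsing_inv_mul B ((Matrix.isUnit_iff_isUnit_det B).mp hB),
      Matrix.one_mulVec]
  have hAinvh : A⁻¹ *ᵥ h = g + ((1 - α)⁻¹ * c) • e := by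
    have key : A *ᵥ (g + ((1 - α)⁻¹ * c) • e) = h := by
      rw [Matrix.mulVec_add, hAg, Matrix.mulVec_smul, hAe, smul_smul]
      rw [mul_comm ((1 - α)⁻¹ * c) (1 - α), ← mul_assoc, mul_inv_cancel₀ h1α, one_mul]
      abel
    rw [← key, hAinv A hA]
  have hA'inve : A'⁻¹ *ᵥ e = (1 - α)⁻¹ • e := by
    have key : A' *ᵥ ((1 - α)⁻¹ • e) = e := by
      rw [Matrix.mulVec_smul, hA'e, smul_smul, inv_mul_cancel₀ h1α, one_smul]
    have h5 := hAinv A' hA' ((1 - α)⁻¹ • e)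
    rw [key] at h5
    exact h5
  have hRHS : α • ((L' - L) *ᵥ g) = (A - A') *ᵥ g := by
    have hmat : A - A' = α • (L' - L) := by
      rw [hAdef, hA'def, smul_sub]
      abel
    rw [hmat, Matrix.smul_mulVec]
  calc (1 - α • L')⁻¹ *ᵥ h - (1 - α • L)⁻¹ *ᵥ h
      = A'⁻¹ *ᵥ h - A⁻¹ *ᵥ h := rfl
    _ = A'⁻¹ *ᵥ h - g - ((1 - α)⁻¹ * c) • e := by rw [hAinvh]; abel
    _ = A'⁻¹ *ᵥ ((A - A') *ᵥ g) := by
        rw [Matrix.sub_mulVec, hAg, Matrix.mulVec_sub, Matrix.mulVec_sub,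
          hAinv A' hA', Matrix.mulVec_smul, hA'inve, smul_smul,
          mul_comm c ((1 - α)⁻¹)]
        abel
    _ = α • (((1 - α • L')⁻¹ * (L' - L)) *ᵥ g) := by
        rw [← Matrix.mulVec_mulVec, ← hRHS, Matrix.mulVec_smul]
    _ = α • (((1 - α • L')⁻¹ * (L' - L)) *ᵥ
          ((1 - α • L + α • Matrix.of fun _ i' : n => π i')⁻¹ *ᵥ h)) := rfl
end

section
/- The derivative at β = 0 of the discounted cost vector under the watermarked policy satisfies ∂η(γ̃)/∂β |_{β=0} = α B(ν, γ*) g_α(γ*), where B(ν,γ*) = (I − α L^{γ*})^{-1}(L^ν − L^{γ*}). Equivalently, η(γ̃) − η(γ*) = αβ B(ν,γ*) g_α(γ*) + o(β) as β → 0. -/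
open Matrix

/-- The derivative at `β = 0` of the discounted cost vector under the
watermarked policy, `η(γ̃) = (I − α L^{γ̃})⁻¹ h` with `L^{γ̃} = (1−β) L^{γ*} + β L^ν`,
satisfies `∂η(γ̃)/∂β |_{β=0} = α B(ν,γ*) g_α(γ*)`, where
`B(ν,γ*) = (I − α L^{γ*})⁻¹ (L^ν − L^{γ*})` and
`g_α(γ*) = (I − α L^{γ*} + α e π^T)⁻¹ h` is the α-potential (equivalently,
`η(γ̃) − η(γ*) = α β B(ν,γ*) g_α(γ*) + o(β)` as `β → 0`). -/
theorem stmt10 {n : Type*} [Fintype n] [DecidableEq n]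
    (Lstar Lν : Matrix n n ℝ) (α : ℝ) (hα : α ∈ Set.Ioo (0 : ℝ) 1)
    (h : n → ℝ)
    -- `L^{γ*}` and `L^ν` are row-stochastic
    (hL_nonneg : ∀ i i', 0 ≤ Lstar i i') (hL_row : ∀ i, ∑ i', Lstar i i' = 1)
    (hLν_nonneg : ∀ i i', 0 ≤ Lν i i') (hLν_row : ∀ i, ∑ i', Lν i i' = 1)
    -- `π` is the stationary distribution of `L^{γ*}`
    (π : n → ℝ) (hπ_nonneg : ∀ i, 0 ≤ π i) (hπ_sum : ∑ i, π i = 1)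
    (hπ_stat : π ᵥ* Lstar = π) :
    HasDerivAt
      (fun β : ℝ => (1 - α • ((1 - β) • Lstar + β • Lν))⁻¹ *ᵥ h)
      (α • (((1 - α • Lstar)⁻¹ * (Lν - Lstar)) *ᵥ
        ((1 - α • Lstar + α • Matrix.of fun _ i' : n => π i')⁻¹ *ᵥ h)))
      0 := by
  obtain ⟨hα0, hα1⟩ := hα
  set M0 : Matrix n n ℝ := 1 - α • Lstar with hM0def
  set D : Matrix n n ℝ := Lν - Lstar with hDdef
  set E : Matrix n n ℝ := Matrix.of fun _ i' : n => π i' with hEdef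
  set M : ℝ → Matrix n n ℝ := fun β => 1 - α • ((1 - β) • Lstar + β • Lν) with hMdef
  -- basic rewrites
  have hM0 : M 0 = M0 := by simp [hMdef, hM0def]
  have hMβ : ∀ β : ℝ, M β = M0 - (α * β) • D := by
    intro β
    ext i j
    simp [hMdef, hM0def, hDdef, Matrix.sub_apply, Matrix.add_apply, Matrix.smul_apply,
      smul_eq_mul]
    ring
  -- `M0` is invertible (strict diagonal dominance)
  have hdet : M0.det ≠ 0 := by
    apply det_ne_zero_of_sum_row_lt_diag
    intro k
    have hLkk : Lstar k k ≤ 1 := by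
      rw [← hL_row k]
      exact Finset.single_le_sum (fun i _ => hL_nonneg k i) (Finset.mem_univ k)
    have hdiag : M0 k k = 1 - α * Lstar k k := by
      simp [hM0def, Matrix.sub_apply, Matrix.smul_apply, Matrix.one_apply, smul_eq_mul]
    have hoff : ∀ j ∈ Finset.univ.erase k, ‖M0 k j‖ = α * Lstar k j := by
      intro j hj
      have hjk : j ≠ k := Finset.ne_of_mem_erase hj
      have : M0 k j = -(α * Lstar k j) := by
        simp [hM0def, Matrix.sub_apply, Matrix.smul_apply, Matrix.one_apply,
          (Ne.symm hjk), smul_eq_mul]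
      rw [this, norm_neg, Real.norm_eq_abs,
        abs_of_nonneg (mul_nonneg hα0.le (hL_nonneg k j))]
    rw [Finset.sum_congr rfl hoff]
    have hsum : ∑ j ∈ Finset.univ.erase k, α * Lstar k j = α * (1 - Lstar k k) := by
      rw [← Finset.mul_sum, Finset.sum_erase_eq_sub (Finset.mem_univ k), hL_row k]
    rw [hsum, hdiag, Real.norm_eq_abs,
      abs_of_nonneg (by nlinarith [hL_nonneg k k] : (0:ℝ) ≤ 1 - α * Lstar k k)]
    nlinarith [hL_nonneg k k]
  have hunit : IsUnit M0.det := isUnit_iff_ne_zero.mpr hdet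
  have hM0mul : M0 * M0⁻¹ = 1 := Matrix.mul_nonsing_inv _ hunit
  have hM0mul' : M0⁻¹ * M0 = 1 := Matrix.nonsing_inv_mul _ hunit
  -- constant vector facts
  have hDe : D *ᵥ (fun _ : n => (1:ℝ)) = 0 := by
    funext i
    simp only [hDdef, Matrix.mulVec, dotProduct, Matrix.sub_apply, Pi.zero_apply,
      mul_one, sub_mul]
    rw [Finset.sum_sub_distrib]
    simp [hLν_row i, hL_row i]
  have hLE : Lstar * E = E := by
    ext i j
    simp only [Matrix.mul_apply, hEdef, Matrix.of_apply]
    rw [← Finset.sum_mul, hL_row i, one_mul]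
  have hEE : E * E = E := by
    ext i j
    simp only [Matrix.mul_apply, hEdef, Matrix.of_apply]
    rw [← Finset.sum_mul, hπ_sum, one_mul]
  -- the α-potential matrix `N = M0 + α • E` has explicit inverse `(1 - α • E) * M0⁻¹`
  have hM0E : M0 * E = (1 - α) • E := by
    rw [hM0def, Matrix.sub_mul, Matrix.one_mul, Matrix.smul_mul, hLE, sub_smul, one_smul]
  have hNmul : (M0 + α • E) * ((1 - α • E) * M0⁻¹) = 1 := by
    have key : (M0 + α • E) * (1 - α • E) = M0 := by
      rw [Matrix.mul_sub, Matrix.mul_one, Matrix.mul_smul, Matrix.add_mul, Matrix.smul_mul,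
        hM0E, hEE]
      ext i j
      simp only [Matrix.add_apply, Matrix.sub_apply, Matrix.smul_apply, smul_eq_mul]
      ring
    rw [← Matrix.mul_assoc, key, hM0mul]
  have hNinv : (M0 + α • E)⁻¹ = (1 - α • E) * M0⁻¹ := Matrix.inv_eq_right_inv hNmul
  -- the stated derivative equals `α • ((M0⁻¹ * D * M0⁻¹) *ᵥ h)`
  have hkey : α • ((M0⁻¹ * D) *ᵥ ((M0 + α • E)⁻¹ *ᵥ h))
      = α • ((M0⁻¹ * D * M0⁻¹) *ᵥ h) := by
    rw [hNinv]
    have hEsmul : E *ᵥ (M0⁻¹ *ᵥ h) = (π ⬝ᵥ (M0⁻¹ *ᵥ h)) • (fun _ : n => (1:ℝ)) := by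
      funext i
      simp [hEdef, Matrix.mulVec, dotProduct, smul_eq_mul]
    have h1 : ((1 - α • E) * M0⁻¹) *ᵥ h = M0⁻¹ *ᵥ h - α • (E *ᵥ (M0⁻¹ *ᵥ h)) := by
      rw [← Matrix.mulVec_mulVec, Matrix.sub_mulVec, Matrix.one_mulVec,
        Matrix.smul_mulVec]
    rw [h1, Matrix.mulVec_sub, hEsmul]
    have h2 : (M0⁻¹ * D) *ᵥ (α • (π ⬝ᵥ (M0⁻¹ *ᵥ h)) • fun _ : n => (1:ℝ)) = 0 := by
      rw [Matrix.mulVec_smul, Matrix.mulVec_smul, ← Matrix.mulVec_mulVec, hDe]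
      simp
    rw [h2, sub_zero, Matrix.mulVec_mulVec]
  rw [hkey]
  have hfun : (fun β : ℝ => (1 - α • ((1 - β) • Lstar + β • Lν))⁻¹ *ᵥ h)
      = fun β => (M β)⁻¹ *ᵥ h := rfl
  rw [hfun]
  -- continuity facts
  have hMcont : Continuous M := by
    have : M = fun β => M0 - (α * β) • D := funext hMβ
    rw [this]
    exact continuous_const.sub ((continuous_const.mul continuous_id).smul continuous_const)
  have hdetcont : ContinuousAt (fun β => (M β).det) 0 :=
    (hMcont.matrix_det).continuousAt
  have hdet0 : (M 0).det ≠ 0 := by rw [hM0]; exact hdet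
  have hinvcont : ContinuousAt (fun β => (M β)⁻¹) 0 := by
    have heq : (fun β => (M β)⁻¹) = fun β => ((M β).det)⁻¹ • (M β).adjugate := by
      funext β
      rw [Matrix.inv_def, Ring.inverse_eq_inv']
    rw [heq]
    exact (hdetcont.inv₀ hdet0).smul (hMcont.matrix_adjugate).continuousAt
  have hev : ∀ᶠ β in nhds 0, IsUnit (M β).det := by
    filter_upwards [hdetcont.eventually_ne hdet0] with β hβ
    exact isUnit_iff_ne_zero.mpr hβ
  -- the limit function
  set F : ℝ → (n → ℝ) := fun β => α • (((M β)⁻¹ * D * M0⁻¹) *ᵥ h) with hFdef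
  have hFcont : ContinuousAt F 0 := by
    have hG : Continuous (fun A : Matrix n n ℝ => (A * D * M0⁻¹) *ᵥ h) :=
      ((continuous_id.matrix_mul continuous_const).matrix_mul continuous_const).matrix_mulVec
        continuous_const
    exact (hG.continuousAt.comp hinvcont).const_smul α
  have hF0 : F 0 = α • ((M0⁻¹ * D * M0⁻¹) *ᵥ h) := by rw [hFdef]; simp [hM0]
  rw [hasDerivAt_iff_tendsto_slope]
  have htend : Filter.Tendsto F (nhdsWithin 0 {(0:ℝ)}ᶜ) (nhds (α • ((M0⁻¹ * D * M0⁻¹) *ᵥ h))) := by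
    rw [← hF0]
    exact hFcont.continuousWithinAt.tendsto
  refine Filter.Tendsto.congr' ?_ htend
  have hev' : ∀ᶠ β in nhdsWithin 0 {(0:ℝ)}ᶜ, IsUnit (M β).det :=
    nhdsWithin_le_nhds hev
  filter_upwards [hev', self_mem_nhdsWithin] with β hβu hβne
  have hβ : (β : ℝ) ≠ 0 := hβne
  -- resolvent identity
  have hres : (M β)⁻¹ - M0⁻¹ = (α * β) • ((M β)⁻¹ * D * M0⁻¹) := by
    have h1 : (M β)⁻¹ * (M0 - M β) * M0⁻¹ = (M β)⁻¹ - M0⁻¹ := by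
      rw [Matrix.mul_sub, Matrix.sub_mul, Matrix.mul_assoc ((M β)⁻¹) M0 (M0⁻¹), hM0mul,
        Matrix.mul_one, Matrix.nonsing_inv_mul _ hβu, Matrix.one_mul]
    have h2 : M0 - M β = (α * β) • D := by rw [hMβ β]; abel
    rw [← h1, h2, Matrix.mul_smul, Matrix.smul_mul]
  rw [slope_def_module, sub_zero, hM0, ← Matrix.sub_mulVec, hres,
    Matrix.smul_mulVec, smul_smul, hFdef]
  congr 1
  field_simp
end
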